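/- Let T be a string of length n and let ℓ, p be integers with p ≥ 1 and ℓ ≥ 2p. Then for any two distinct runs γ = T[b..e) and γ' = T[b'..e') in RUNS_{ℓ,p}(T), it holds b ≠ b', e ≠ e', and b < b' if and only if e < e'; in particular, neither of the two runs contains the other. -/
import Mathlib


namespace SyncFormal

/-- The fragment `T[i..j)` of a string `T`. -/
def frag {α : Type*} (T : List α) (i j : ℕ) : List α :=
  (T.drop i).take (j - i)

/-- `p` is a period of the string `S`. -/
def IsPeriod {α : Type*} (S : List α) (p : ℕ) : Prop :=
  1 ≤ p ∧ p ≤ S.length ∧ ∀ i : ℕ, i + p < S.length → S[i]? = S[i + p]?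

/-- `per S`: the smallest period of `S`. -/
noncomputable def per {α : Type*} (S : List α) : ℕ :=
  sInf {p | IsPeriod S p}

/-- `Sync` is a `τ`-synchronizing set of `T`. -/
def IsSyncSet {α : Type*} (T : List α) (τ : ℕ) (Sync : Set ℕ) : Prop :=
  (∀ i ∈ Sync, i + 2 * τ ≤ T.length) ∧
  (∀ i j : ℕ, i + 2 * τ ≤ T.length → j + 2 * τ ≤ T.length → i ∈ Sync →
    frag T i (i + 2 * τ) = frag T j (j + 2 * τ) → j ∈ Sync) ∧
  (∀ i : ℕ, i + 3 * τ ≤ T.length + 1 →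
    (Set.Ico i (i + τ) ∩ Sync = ∅ ↔ 3 * per (frag T i (i + 3 * τ - 1)) ≤ τ))

/-- `T[b..e)` is a run (maximal repetition) in `T`. -/
def IsRun {α : Type*} (T : List α) (b e : ℕ) : Prop :=
  b < e ∧ e ≤ T.length ∧
  2 * per (frag T b e) ≤ e - b ∧
  (b = 0 ∨ T[b - 1]? ≠ T[b - 1 + per (frag T b e)]?) ∧
  (e = T.length ∨ T[e]? ≠ T[e - per (frag T b e)]?)

/-- `T[b..e)` is a run of length at least `ℓ` and period at most `p`
(i.e., an element of `RUNS_{ℓ,p}(T)`). -/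
def IsRunLP {α : Type*} (T : List α) (ℓ p b e : ℕ) : Prop :=
  IsRun T b e ∧ ℓ ≤ e - b ∧ per (frag T b e) ≤ p

/-- `λ_k = (8/7)^⌊k/2⌋`. -/
noncomputable def lam (k : ℕ) : ℝ := (8 / 7 : ℝ) ^ (k / 2)

/-- `α_0 = 1`, `α_{k+1} = α_k + ⌊λ_k⌋`. -/
noncomputable def alph : ℕ → ℕ
  | 0 => 1
  | k + 1 => alph k + ⌊lam k⌋₊

/-- `m`-fold concatenation `R^m`. -/
def listPow {α : Type*} (R : List α) : ℕ → List α
  | 0 => []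
  | m + 1 => R ++ listPow R m

/-- The length of the primitive root of `S`
(the shortest prefix `R` of `S` with `S = R^m` for some `m ≥ 1`). -/
noncomputable def primRootLen {α : Type*} (S : List α) : ℕ :=
  sInf {r | 0 < r ∧ ∃ m : ℕ, 1 ≤ m ∧ S = listPow (S.take r) m}

/-- `i` and `j` are consecutive elements of the set `S`. -/
def Consecutive (S : Set ℕ) (i j : ℕ) : Prop :=
  i ∈ S ∧ j ∈ S ∧ i < j ∧ ∀ m ∈ S, m ≤ i ∨ j ≤ m

/-- `(B k)_{k ∈ ℕ}` is a recompression chain for `T`. -/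
def IsRecompressionChain {α : Type*} (T : List α) (B : ℕ → Set ℕ) : Prop :=
  B 0 = Set.Ico 1 T.length ∧
  (∀ k, B (k + 1) ⊆ B k) ∧
  (∀ k, B k ⊆ Set.Ico 1 T.length) ∧
  (∀ k, (B k).Finite ∧ ((B k).ncard : ℝ) * lam k ≤ 4 * T.length) ∧
  (∀ k i j : ℕ, alph k ≤ i → i + alph k ≤ T.length → alph k ≤ j → j + alph k ≤ T.length →
    i ∈ B k → frag T (i - alph k) (i + alph k) = frag T (j - alph k) (j + alph k) → j ∈ B k) ∧
  (∀ k i j : ℕ, Consecutive (B k ∪ {0, T.length}) i j →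
    (((j - i : ℕ) : ℝ) ≤ 7 / 4 * lam k ∨ (primRootLen (frag T i j) : ℝ) ≤ lam k))

/-- `k(τ) = max{ j : j = 0 ∨ 16·λ_{j-1} ≤ τ }`. -/
noncomputable def kOf (τ : ℕ) : ℕ :=
  sSup {j : ℕ | j = 0 ∨ 16 * lam (j - 1) ≤ (τ : ℝ)}

/-- The Elias-γ code of a positive integer `x`:
`⌊log₂ x⌋` zeros followed by the binary representation of `x` (MSB first). -/
def eliasGamma (x : ℕ) : List Bool :=
  List.replicate (Nat.log 2 x) false ++ (Nat.bits x).reverse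

/-- Sparse encoding, with `z` pending zeros in front of the remaining sequence. -/
def sparseEncAux : ℕ → List ℕ → List Bool
  | z, [] => if z = 0 then [] else false :: eliasGamma z
  | z, 0 :: rest => sparseEncAux (z + 1) rest
  | z, x :: rest =>
      (if z = 0 then [] else false :: eliasGamma z) ++ (true :: eliasGamma x)
        ++ sparseEncAux 0 rest

/-- The sparse encoding `⟨A⟩` of a sequence of non-negative integers. -/
def sparseEnc (A : List ℕ) : List Bool := sparseEncAux 0 A

/-- Number of bits contributed by the zero-run tokens of the sparse encoding,
with `z` pending zeros. -/
def zeroRunBitsAux : ℕ → List ℕ → ℕ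
  | z, [] => if z = 0 then 0 else 2 * Nat.log 2 z + 2
  | z, 0 :: rest => zeroRunBitsAux (z + 1) rest
  | z, _ :: rest => (if z = 0 then 0 else 2 * Nat.log 2 z + 2) + zeroRunBitsAux 0 rest

/-- Number of bits contributed by zero-run tokens to `⟨A⟩`. -/
def zeroRunBits (A : List ℕ) : ℕ := zeroRunBitsAux 0 A

/-- The natural number whose binary representation (MSB first) is `B`. -/
def bitsToNat (B : List Bool) : ℕ :=
  B.foldl (fun n b => 2 * n + cond b 1 0) 0

/-- The symbol of the zipped string for a column of values. -/
def zipSym (col : List ℕ) : ℕ :=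
  if col.all (· == 0) then 0 else bitsToNat (sparseEnc col)

/-- `zip(A_1, …, A_t)` for sequences of common length `n`. -/
def zipSeqs (A : List (List ℕ)) (n : ℕ) : List ℕ :=
  (List.range n).map fun i => zipSym (A.map fun S => S.getD i 0)

/-- Running a deterministic transducer with transition function `δ` from state `s`
on an input string: returns the state sequence `s_0, …, s_n` and the output string. -/
def runAux {Q Γ I : Type*} (δ : Q → I → Q × Γ) : Q → List I → List Q × List Γ
  | s, [] => ([s], [])
  | s, x :: xs =>
      (s :: (runAux δ (δ s x).1 xs).1, (δ s x).2 :: (runAux δ (δ s x).1 xs).2)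

/-- `R_{ℓ,p}(T) = { i : per(T[i..i+ℓ)) ≤ p }`. -/
def RSet {α : Type*} (T : List α) (ℓ p : ℕ) : Set ℕ :=
  {i | i + ℓ ≤ T.length ∧ per (frag T i (i + ℓ)) ≤ p}

section Statement16Aux

variable {α : Type*}

/-- `q` is a period of `T` on the interval `[a, c)`. -/
def PerOn (T : List α) (a c q : ℕ) : Prop :=
  ∀ i, a ≤ i → i + q < c → T[i]? = T[i + q]?

lemma frag_getElem?' (T : List α) (b e i : ℕ) (hi : i < e - b) :
    (frag T b e)[i]? = T[b + i]? := by
  rw [frag, List.getElem?_take, if_pos hi, List.getElem?_drop]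

lemma frag_length' (T : List α) (b e : ℕ) (he : e ≤ T.length) :
    (frag T b e).length = e - b := by
  simp [frag]; omega

lemma isPeriod_frag_iff (T : List α) {b e : ℕ} (q : ℕ) (he : e ≤ T.length) :
    IsPeriod (frag T b e) q ↔ 1 ≤ q ∧ q ≤ e - b ∧ PerOn T b e q := by
  rw [IsPeriod, frag_length' T b e he]
  constructor
  · rintro ⟨h1, h2, h3⟩
    refine ⟨h1, h2, fun i hi hiq => ?_⟩
    have h4 := h3 (i - b) (by omega)
    rwa [frag_getElem?' T b e _ (by omega), frag_getElem?' T b e _ (by omega),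
      show b + (i - b) = i by omega, show b + (i - b + q) = i + q by omega] at h4
  · rintro ⟨h1, h2, h3⟩
    refine ⟨h1, h2, fun i hiq => ?_⟩
    rw [frag_getElem?' T b e _ (by omega), frag_getElem?' T b e _ (by omega)]
    have h4 := h3 (b + i) (by omega) (by omega)
    rwa [show b + i + q = b + (i + q) by omega] at h4

lemma per_spec (T : List α) {b e : ℕ} (hbe : b < e) (he : e ≤ T.length) :
    1 ≤ per (frag T b e) ∧ per (frag T b e) ≤ e - b ∧ PerOn T b e (per (frag T b e)) := by
  have hmem : per (frag T b e) ∈ {p | IsPeriod (frag T b e) p} :=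
    Nat.sInf_mem ⟨e - b, (isPeriod_frag_iff T (e - b) he).mpr
      ⟨by omega, le_refl _, fun i hi hiq => absurd hiq (by omega)⟩⟩
  exact (isPeriod_frag_iff T _ he).mp hmem

lemma per_le' (T : List α) {b e g : ℕ} (he : e ≤ T.length)
    (h1 : 1 ≤ g) (h2 : g ≤ e - b) (h3 : PerOn T b e g) : per (frag T b e) ≤ g :=
  Nat.sInf_le ((isPeriod_frag_iff T g he).mpr ⟨h1, h2, h3⟩)

lemma perOn_sub (T : List α) {a c q q' : ℕ} (hqq' : q < q') (h : q + q' ≤ c - a)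
    (h1 : PerOn T a c q) (h2 : PerOn T a c q') : PerOn T a c (q' - q) := by
  intro i hi hic
  by_cases hcase : a + q ≤ i
  · have e1 := h1 (i - q) (by omega) (by omega)
    rw [show i - q + q = i by omega] at e1
    have e2 := h2 (i - q) (by omega) (by omega)
    rw [e1] at e2
    rwa [show i - q + q' = i + (q' - q) by omega] at e2
  · have e1 := h2 i hi (by omega)
    have e2 := h1 (i + q' - q) (by omega) (by omega)
    rw [show i + q' - q + q = i + q' by omega] at e2
    rw [e1, ← e2]
    congr 1
    omega

lemma perOn_gcd_aux (T : List α) (a c : ℕ) :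
    ∀ n q q', q + q' ≤ n → 0 < q → 0 < q' → q + q' ≤ c - a →
      PerOn T a c q → PerOn T a c q' → PerOn T a c (Nat.gcd q q') := by
  intro n
  induction n with
  | zero => intro q q' h hq; omega
  | succ n ih =>
    intro q q' hn hq hq' hlen h1 h2
    rcases lt_trichotomy q q' with hlt | heq | hgt
    · have hsub : PerOn T a c (q' - q) := perOn_sub T hlt hlen h1 h2
      have h3 := ih q (q' - q) (by omega) hq (by omega) (by omega) h1 hsub
      rwa [Nat.gcd_sub_self_right hlt.le] at h3
    · subst heq; rwa [Nat.gcd_self]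
    · have hsub : PerOn T a c (q - q') := perOn_sub T hgt (by omega) h2 h1
      have h3 := ih q' (q - q') (by omega) hq' (by omega) (by omega) h2 hsub
      rw [Nat.gcd_comm]
      rwa [Nat.gcd_sub_self_right hgt.le] at h3

lemma perOn_congr (T : List α) {a c q : ℕ} (h : PerOn T a c q) :
    ∀ k i, a ≤ i → i + k * q < c → T[i]? = T[i + k * q]? := by
  intro k
  induction k with
  | zero => simp
  | succ k ih =>
    intro i hi hk
    have hm : (k + 1) * q = k * q + q := Nat.succ_mul k q
    have h1 := ih i hi (by omega)
    have h2 := h (i + k * q) (by omega) (by omega)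
    rw [h1, h2]
    congr 1
    omega

lemma perOn_congr' (T : List α) {a c q : ℕ} (h : PerOn T a c q) (hq : 0 < q)
    {i j : ℕ} (hi : a ≤ i) (hj : a ≤ j) (hic : i < c) (hjc : j < c)
    (hmod : i % q = j % q) : T[i]? = T[j]? := by
  rcases le_total i j with hle | hle
  · obtain ⟨k, hk⟩ := (Nat.modEq_iff_dvd' hle).mp hmod
    have hk' : j = i + k * q := by rw [Nat.mul_comm]; omega
    rw [hk']
    exact perOn_congr T h k i hi (hk' ▸ hjc)
  · obtain ⟨k, hk⟩ := (Nat.modEq_iff_dvd' hle).mp hmod.symm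
    have hk' : i = j + k * q := by rw [Nat.mul_comm]; omega
    rw [hk']
    exact (perOn_congr T h k j hj (hk' ▸ hic)).symm

lemma perOn_extend (T : List α) {b e a c q g : ℕ} (hq : PerOn T b e q) (hgper : PerOn T a c g)
    (hq0 : 0 < q) (hg0 : 0 < g) (hba : b ≤ a) (hce : c ≤ e) (hlen : q + g ≤ c - a) :
    PerOn T b e g := by
  intro i hi hie
  set j := a + (i + q * (a + 1) - a) % q with hjdef
  have haN : a ≤ i + q * (a + 1) := by
    have h5 := Nat.le_mul_of_pos_left (a + 1) hq0
    omega
  have hmodj : j % q = i % q := by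
    have h1 : (i + q * (a + 1) - a) % q ≡ (i + q * (a + 1) - a) [MOD q] := Nat.mod_modEq _ _
    have h2 : j ≡ a + (i + q * (a + 1) - a) [MOD q] := h1.add_left a
    rw [show a + (i + q * (a + 1) - a) = i + q * (a + 1) by omega] at h2
    have h3 : (i + q * (a + 1)) % q = i % q := Nat.add_mul_mod_self_left i q (a + 1)
    calc j % q = (i + q * (a + 1)) % q := h2
      _ = i % q := h3
  have hjlt : (i + q * (a + 1) - a) % q < q := Nat.mod_lt _ hq0
  have hja : a ≤ j := Nat.le_add_right _ _
  have hjc : j + g < c := by omega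
  have hcalc1 : T[i]? = T[j]? :=
    perOn_congr' T hq hq0 hi (hba.trans hja) (by omega) (by omega) hmodj.symm
  have hcalc2 : T[j]? = T[j + g]? := hgper j hja hjc
  have hmodg : (j + g) % q = (i + g) % q := Nat.ModEq.add_right g hmodj
  have hcalc3 : T[j + g]? = T[i + g]? :=
    perOn_congr' T hq hq0 (by omega) (by omega) (by omega) (by omega) hmodg
  rw [hcalc1, hcalc2, hcalc3]

lemma runLP_nested_eq (T : List α) (ℓ p : ℕ) (hp : 1 ≤ p) (hℓ : 2 * p ≤ ℓ)
    {b e b' e' : ℕ} (h1 : IsRunLP T ℓ p b e) (h2 : IsRunLP T ℓ p b' e')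
    (hbb : b ≤ b') (hee : e' ≤ e) : b = b' ∧ e = e' := by
  obtain ⟨⟨hbe, he, _, hleft, hright⟩, hlen1, hqp⟩ := h1
  obtain ⟨⟨hbe', he', _, hleft', hright'⟩, hlen2, hqp'⟩ := h2
  set q := per (frag T b e) with hqdef
  set q' := per (frag T b' e') with hq'def
  obtain ⟨hq1, hq2, hqper⟩ := per_spec T hbe he
  obtain ⟨hq1', hq2', hq'per⟩ := per_spec T hbe' he'
  have hov : q + q' ≤ e' - b' := by omega
  have hqov : PerOn T b' e' q := fun i hi hic => hqper i (by omega) (by omega)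
  have hg0 : 0 < Nat.gcd q q' := Nat.gcd_pos_of_pos_left _ hq1
  have hgle : Nat.gcd q q' ≤ q := Nat.gcd_le_left _ hq1
  have hgle' : Nat.gcd q q' ≤ q' := Nat.gcd_le_right _ hq1'
  have hgper : PerOn T b' e' (Nat.gcd q q') :=
    perOn_gcd_aux T b' e' (q + q') q q' le_rfl hq1 hq1' hov hqov hq'per
  have hext : PerOn T b e (Nat.gcd q q') :=
    perOn_extend T hqper hgper hq1 hg0 hbb hee (by omega)
  have hgq : Nat.gcd q q' = q :=
    le_antisymm hgle (per_le' T he hg0 (by omega) hext)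
  have hgq' : Nat.gcd q q' = q' :=
    le_antisymm hgle' (per_le' T he' hg0 (by omega) hgper)
  have hqq' : q = q' := by rw [← hgq, hgq']
  constructor
  · by_contra hne
    have hblt : b < b' := lt_of_le_of_ne hbb hne
    rcases hleft' with h0 | hneq
    · omega
    · apply hneq
      rw [← hqq']
      exact hqper (b' - 1) (by omega) (by omega)
  · by_contra hne
    have helt : e' < e := lt_of_le_of_ne hee (Ne.symm hne)
    rcases hright' with h0 | hneq
    · omega
    · apply hneq
      rw [← hqq']
      have h6 := hqper (e' - q) (by omega) (by omega)
      rw [show e' - q + q = e' by omega] at h6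
      exact h6.symm

end Statement16Aux

/-- Two distinct runs in `RUNS_{ℓ,p}(T)` (`ℓ ≥ 2p ≥ 2`) have distinct start
positions, distinct end positions, and these are ordered consistently. -/
theorem statement16 {α : Type*} (T : List α) (ℓ p : ℕ) (hp : 1 ≤ p) (hℓ : 2 * p ≤ ℓ)
    (b e b' e' : ℕ) (h1 : IsRunLP T ℓ p b e) (h2 : IsRunLP T ℓ p b' e')
    (hne : (b, e) ≠ (b', e')) :
    b ≠ b' ∧ e ≠ e' ∧ (b < b' ↔ e < e') := by
  refine ⟨?_, ?_, ?_, ?_⟩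
  · intro hbb
    rcases le_total e e' with h | h
    · obtain ⟨hb2, he2⟩ := runLP_nested_eq T ℓ p hp hℓ h2 h1 (le_of_eq hbb.symm) h
      exact hne (by rw [hbb, ← he2])
    · obtain ⟨hb2, he2⟩ := runLP_nested_eq T ℓ p hp hℓ h1 h2 (le_of_eq hbb) h
      exact hne (by rw [hbb, he2])
  · intro hee
    rcases le_total b b' with h | h
    · obtain ⟨hb2, he2⟩ := runLP_nested_eq T ℓ p hp hℓ h1 h2 h (le_of_eq hee.symm)
      exact hne (by rw [hb2, hee])
    · obtain ⟨hb2, he2⟩ := runLP_nested_eq T ℓ p hp hℓ h2 h1 h (le_of_eq hee)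
      exact hne (by rw [← hb2, hee])
  · intro hblt
    by_contra h
    push_neg at h
    obtain ⟨hb2, _⟩ := runLP_nested_eq T ℓ p hp hℓ h1 h2 hblt.le h
    omega
  · intro helt
    by_contra h
    push_neg at h
    obtain ⟨_, he2⟩ := runLP_nested_eq T ℓ p hp hℓ h2 h1 h helt.le
    omega

end SyncFormal
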